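/- Let m ≥ 2 be an even integer. If x₁, x₂, λ are real numbers satisfying x₂^{m-1} = λx₁ and −x₁^{m-1} = λx₂, then x₁ = 0 and x₂ = 0. Consequently, the order-m tensor A of format 2×⋯×2 whose only nonzero entries are a_{12⋯2} = 1 and a_{21⋯1} = −1 has no real eigenpair. -/

import Mathlib

open Finset

/-- The contraction `A x^{m-1}` of an order-`m` real tensor of format `n × ⋯ × n`
with the vector `x ∈ ℝⁿ`. -/
noncomputable def tApplyR (m n : ℕ) (A : (Fin m → Fin n) → ℝ) (x : Fin n → ℝ) :
    Fin n → ℝ :=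
  fun j => ∑ i : Fin (m - 1) → Fin n,
    A (fun k => if hk : (k : ℕ) = 0 then j
        else i ⟨(k : ℕ) - 1, by have := k.isLt; omega⟩) * ∏ l, x (i l)

/-- The order-`m` tensor of format `2 × ⋯ × 2` whose only nonzero entries are
`a_{1 2 ⋯ 2} = 1` and `a_{2 1 ⋯ 1} = -1`. -/
noncomputable def skewTensor (m : ℕ) : (Fin m → Fin 2) → ℝ :=
  fun i =>
    if ∀ k : Fin m, i k = if (k : ℕ) = 0 then 0 else 1 then 1
    else if ∀ k : Fin m, i k = if (k : ℕ) = 0 then 1 else 0 then -1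
    else 0

/-! Multiplying `x₂ ^ (m - 1) = λ x₁` by `x₂` and `-x₁ ^ (m - 1) = λ x₂` by `x₁` and subtracting
gives `x₁ ^ m + x₂ ^ m = 0`, a sum of even powers, so `x₁ = x₂ = 0`. The tensor has a single
nonzero entry in each slice, so it contracts to `(x₂ ^ (m - 1), -x₁ ^ (m - 1))` and its
eigenpairs are exactly the nonzero solutions of this system. -/
theorem eq_zero_of_pow_eq_mul_of_neg_pow_eq_mul {R : Type*} [CommRing R] [LinearOrder R]
    [IsStrictOrderedRing R] {n : ℕ} (hn : Odd n) {x y c : R}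
    (h₁ : y ^ n = c * x) (h₂ : -x ^ n = c * y) : x = 0 ∧ y = 0 := by
  have hsum : x ^ (n + 1) + y ^ (n + 1) = 0 := by linear_combination y * h₁ - x * h₂
  have heven : Even (n + 1) := hn.add_one
  obtain ⟨hx, hy⟩ := (add_eq_zero_iff_of_nonneg (heven.pow_nonneg x) (heven.pow_nonneg y)).1 hsum
  exact ⟨pow_eq_zero_iff n.succ_ne_zero |>.1 hx, pow_eq_zero_iff n.succ_ne_zero |>.1 hy⟩

/-- The multi-index `(j, i₁, …, i_{m-1})` over which `tApplyR` sums. -/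
def consIndex {m n : ℕ} (j : Fin n) (i : Fin (m - 1) → Fin n) : Fin m → Fin n :=
  fun k => if hk : (k : ℕ) = 0 then j else i ⟨(k : ℕ) - 1, by have := k.isLt; omega⟩

theorem tApplyR_eq_sum_consIndex (m n : ℕ) (A : (Fin m → Fin n) → ℝ) (x : Fin n → ℝ)
    (j : Fin n) :
    tApplyR m n A x j = ∑ i : Fin (m - 1) → Fin n, A (consIndex j i) * ∏ l, x (i l) :=
  rfl

theorem consIndex_eq_iff {m n : ℕ} (hm : 0 < m) (j v w : Fin n) (i : Fin (m - 1) → Fin n) :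
    (∀ k : Fin m, consIndex j i k = if (k : ℕ) = 0 then v else w) ↔
      j = v ∧ i = fun _ => w := by
  constructor
  · intro h
    refine ⟨by simpa [consIndex] using h ⟨0, hm⟩, funext fun l => ?_⟩
    simpa [consIndex] using h ⟨l + 1, by omega⟩
  · rintro ⟨rfl, rfl⟩ k
    by_cases hk : (k : ℕ) = 0 <;> simp [consIndex, hk]

theorem skewTensor_consIndex_zero {m : ℕ} (hm : 0 < m) (i : Fin (m - 1) → Fin 2) :
    skewTensor m (consIndex 0 i) = if i = fun _ => 1 then 1 else 0 := by
  simp [skewTensor, consIndex_eq_iff hm]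

theorem skewTensor_consIndex_one {m : ℕ} (hm : 0 < m) (i : Fin (m - 1) → Fin 2) :
    skewTensor m (consIndex 1 i) = if i = fun _ => 0 then -1 else 0 := by
  simp [skewTensor, consIndex_eq_iff hm]

theorem tApplyR_skewTensor {m : ℕ} (hm : 0 < m) (x : Fin 2 → ℝ) :
    tApplyR m 2 (skewTensor m) x = ![x 1 ^ (m - 1), -x 0 ^ (m - 1)] := by
  funext j
  fin_cases j
  · simp [tApplyR_eq_sum_consIndex, skewTensor_consIndex_zero hm]
  · simp [tApplyR_eq_sum_consIndex, skewTensor_consIndex_one hm]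

/-- For even `m ≥ 2`: the system `x₂^{m-1} = λ x₁`, `-x₁^{m-1} = λ x₂` has only the
trivial real solution, and consequently the tensor `skewTensor m` has no real
eigenpair. -/
theorem no_real_eigenpair (m : ℕ) (hm : 2 ≤ m) (hme : Even m) :
    (∀ x₁ x₂ lam : ℝ, x₂ ^ (m - 1) = lam * x₁ → -x₁ ^ (m - 1) = lam * x₂ →
      x₁ = 0 ∧ x₂ = 0) ∧
    ¬ ∃ (lam : ℝ) (x : Fin 2 → ℝ), x ≠ 0 ∧ tApplyR m 2 (skewTensor m) x = lam • x := by
  have hodd : Odd (m - 1) := Nat.Even.sub_odd (by omega) hme odd_one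
  have hsys : ∀ x₁ x₂ lam : ℝ, x₂ ^ (m - 1) = lam * x₁ → -x₁ ^ (m - 1) = lam * x₂ →
      x₁ = 0 ∧ x₂ = 0 := fun _ _ _ => eq_zero_of_pow_eq_mul_of_neg_pow_eq_mul hodd
  refine ⟨hsys, ?_⟩
  rintro ⟨lam, x, hx, heq⟩
  rw [tApplyR_skewTensor (by omega)] at heq
  obtain ⟨h₀, h₁⟩ := hsys (x 0) (x 1) lam (by simpa using congrFun heq 0)
    (by simpa using congrFun heq 1)
  exact hx (funext fun j => by fin_cases j <;> assumption)
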